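/- Let B be a finite alphabet not containing ⋆, let d' ≥ 1, and let 𝒜 be a deterministic Büchi automaton over B ∪ {⋆} such that every infinite word accepted by 𝒜 contains at least one occurrence of ⋆. Then every word accepted by 𝒜 belongs to B^{d'ℕ}⋆B^ω (i.e., is a finite word over B of length a multiple of d', followed by a single ⋆, followed by an infinite word over B) if and only if δ(q,⋆) ∈ Q_∅ for every state q ∈ Q_fra ∪ Q_1 ∪ Q_2 ∪ … ∪ Q_{d'−1}. -/

import Mathlib

/-- A deterministic Büchi automaton over alphabet `A` with states `Q`. -/
structure DBA (A : Type) (Q : Type) where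
  delta : Q → A → Q
  init : Q
  F : Set Q

namespace DBA

variable {A Q : Type}

/-- The transition function extended to finite words. -/
def deltaStar (M : DBA A Q) : Q → List A → Q
  | q, [] => q
  | q, a :: u => deltaStar M (M.delta q a) u

/-- The run of `M` on the infinite word `w`. -/
def run (M : DBA A Q) (w : ℕ → A) : ℕ → Q
  | 0 => M.init
  | n + 1 => M.delta (run M w n) (w n)

/-- `M` accepts `w` if some accepting state occurs infinitely often in the run. -/
def Accepts (M : DBA A Q) (w : ℕ → A) : Prop :=
  ∃ q ∈ M.F, ∀ N : ℕ, ∃ n, N ≤ n ∧ run M w n = q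

/-- The ω-language of `M`. -/
def Lang (M : DBA A Q) : Set (ℕ → A) := {w | M.Accepts w}

/-- `M` with initial state changed to `q`. -/
def start (M : DBA A Q) (q : Q) : DBA A Q := { M with init := q }

/-- `q'` is accessible from `q` (by a nonempty word). -/
def Reach (M : DBA A Q) (q q' : Q) : Prop :=
  ∃ u : List A, u ≠ [] ∧ deltaStar M q u = q'

/-- `M` is weak: `F` is a union of strongly connected components. -/
def Weak (M : DBA A Q) : Prop :=
  ∀ q ∈ M.F, ∀ q', M.Reach q q' → M.Reach q' q → q' ∈ M.F

/-- `M` is minimal: distinct states recognize distinct languages. -/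
def Minimal (M : DBA A Q) : Prop :=
  ∀ q q' : Q, q ≠ q' → (M.start q).Lang ≠ (M.start q').Lang

end DBA

/-- Concatenation of a finite word and an infinite word. -/
def cat {A : Type} (u : List A) (w : ℕ → A) : ℕ → A :=
  fun n => if h : n < u.length then u.get ⟨n, h⟩ else w (n - u.length)

/-- The value `⟨v⟩ = Σ_{i<|v|} v[i]·b^(|v|-1-i)` of a finite digit word. -/
noncomputable def natVal (b : ℕ) (v : List (Fin b)) : ℝ :=
  ∑ i : Fin v.length, ((v.get i : ℕ) : ℝ) * (b : ℝ) ^ (v.length - 1 - (i : ℕ))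

/-- The fractional value `⟨w⟩_f = Σ_{i≥0} w[i]·b^(-i-1)` of an infinite digit word. -/
noncomputable def fracVal (b : ℕ) (w : ℕ → Fin b) : ℝ :=
  ∑' i : ℕ, ((w i : ℕ) : ℝ) * (b : ℝ) ^ (-(i : ℤ) - 1)

/-- The word `𝐮⋆𝐰` over `Σ^d ∪ {⋆}`; `none` is the separator `⋆`. -/
def encWord {b d : ℕ} (u : List (Fin d → Fin b)) (w : ℕ → Fin d → Fin b) :
    ℕ → Option (Fin d → Fin b) :=
  cat (u.map some ++ [none]) (fun n => some (w n))

/-- The vector of reals encoded by `𝐮⋆𝐰`. -/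
noncomputable def vecVal {b d : ℕ} (u : List (Fin d → Fin b)) (w : ℕ → Fin d → Fin b) :
    Fin d → ℝ :=
  fun i => natVal b (u.map fun t => t i) + fracVal b (fun n => w n i)

/-- A language of words over `Σ^d ∪ {⋆}` is saturated if membership only depends on
the encoded vector of reals. -/
def Saturated {b d : ℕ} (L : Set (ℕ → Option (Fin d → Fin b))) : Prop :=
  ∀ (u : List (Fin d → Fin b)) (w : ℕ → Fin d → Fin b)
    (u' : List (Fin d → Fin b)) (w' : ℕ → Fin d → Fin b),
    vecVal u w = vecVal u' w' → encWord u w ∈ L → encWord u' w' ∈ L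

/-- The parallelization `par(𝒜)` of an automaton over `Σ ∪ {⋆}`. -/
def parDBA {Q : Type} {b : ℕ} (d : ℕ) (M : DBA (Option (Fin b)) Q) :
    DBA (Option (Fin d → Fin b)) Q where
  delta := fun q x =>
    match x with
    | none => M.delta q none
    | some t => M.deltaStar q (List.ofFn fun i => some (t i))
  init := M.init
  F := M.F

/-- Fill the `f`-th component of a tuple of `Σ^□_f` with the digit `z`. -/
def fixTuple {b d : ℕ} (f : Fin d) (z : Fin b) (t : {i : Fin d // i ≠ f} → Fin b) :
    Fin d → Fin b :=
  fun i => if h : i = f then z else t ⟨i, h⟩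

/-- The automaton `𝒜^{z@f}` over `Σ^□_f ∪ {⋆}`; a letter of `Σ^□_f` is represented by
its tuple of non-`f` components (the `f`-th component being `□`). -/
def fixDBA {Q : Type} {b d : ℕ} (M : DBA (Option (Fin d → Fin b)) Q) (f : Fin d) (z : Fin b) :
    DBA (Option ({i : Fin d // i ≠ f} → Fin b)) Q where
  delta := fun q x =>
    match x with
    | none => M.delta q none
    | some t => M.delta q (some (fixTuple f z t))
  init := M.init
  F := M.F

/-- `fix_{□@f}(𝐰)`: replace the `f`-th component of every non-`⋆` letter by `□`. -/
def eraseComp {b d : ℕ} (f : Fin d) (w : ℕ → Option (Fin d → Fin b)) :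
    ℕ → Option ({i : Fin d // i ≠ f} → Fin b) :=
  fun n => (w n).map fun t i => t i.val

/-- `fix_{z@f}(𝐰)`: replace the `f`-th component (`□`) of every non-`⋆` letter by `z`. -/
def fillComp {b d : ℕ} (f : Fin d) (z : Fin b) (w : ℕ → Option ({i : Fin d // i ≠ f} → Fin b)) :
    ℕ → Option (Fin d → Fin b) :=
  fun n => (w n).map (fixTuple f z)

/-- The automaton `𝒜^{seq z}`, over alphabet `Σ ∪ {□,⋆}` (here `none` is `⋆` and
`some none` is `□`), with states `(Q × {0,…,d−1}) ∪ {⊥}` (`none` is `⊥`). -/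
def seqDBA {Q : Type} {b : ℕ} (d : ℕ) (hd : 0 < d) (M : DBA (Option (Fin b)) Q) (z : Fin b) :
    DBA (Option (Option (Fin b))) (Option (Q × Fin d)) where
  delta := fun s x =>
    match s, x with
    | none, _ => none
    | some (q, i), none => some (M.delta q none, i)
    | some (q, i), some (some a) =>
        if h : (i : ℕ) + 1 < d then some (M.delta q (some a), ⟨(i : ℕ) + 1, h⟩) else none
    | some (q, i), some none =>
        if (i : ℕ) = d - 1 then some (M.delta q (some z), ⟨0, hd⟩) else none
  init := some (M.init, ⟨0, hd⟩)
  F := {s | ∃ q ∈ M.F, ∃ i : Fin d, s = some (q, i)}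

/-- Auxiliary function for flattening an infinite word of blocks:
`flatAux blk v n` is the pair (block index, offset inside the block) of position `n`. -/
def flatAux {A B : Type} (blk : A → List B) (v : ℕ → A) : ℕ → ℕ × ℕ
  | 0 => (0, 0)
  | n + 1 =>
      let p := flatAux blk v n
      if p.2 + 1 < (blk (v p.1)).length then (p.1, p.2 + 1) else (p.1 + 1, 0)

/-- Flattening of an infinite word of (nonempty) blocks. -/
def flatten {A B : Type} [Inhabited B] (blk : A → List B) (v : ℕ → A) : ℕ → B :=
  fun n => (blk (v (flatAux blk v n).1)).getD (flatAux blk v n).2 default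

/-- The block of a letter of `Σ^d ∪ {⋆}`: a `d`-tuple becomes its list of components,
`⋆` stays a single letter. -/
def parBlock {b d : ℕ} : Option (Fin d → Fin b) → List (Option (Fin b))
  | none => [none]
  | some t => List.ofFn fun i => some (t i)

/-- `seq(𝐯)`: the sequentialization of an infinite word over `Σ^d ∪ {⋆}`. -/
def seqWord {b d : ℕ} (v : ℕ → Option (Fin d → Fin b)) : ℕ → Option (Fin b) :=
  flatten parBlock v

/-- The block of a letter of `Σ^□_f ∪ {⋆}`, as a word over `Σ ∪ {□,⋆}`. -/
def sqBlock {b d : ℕ} (f : Fin d) :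
    Option ({i : Fin d // i ≠ f} → Fin b) → List (Option (Option (Fin b)))
  | none => [none]
  | some t => List.ofFn fun i : Fin d =>
      if h : i = f then some none else some (some (t ⟨i, h⟩))

/-- Number of non-`⋆` letters among the first `n` letters of `w`. -/
def digitCount {b : ℕ} (w : ℕ → Option (Fin b)) : ℕ → ℕ
  | 0 => 0
  | n + 1 => digitCount w n + (if w n = none then 0 else 1)

/-!
Acceptance only depends on suffixes: if `w` is accepted and `w n = ⋆`, then the state reached
just after that `⋆` has a nonempty language. A word lies in `B^{d'ℕ}⋆B^ω` exactly when its set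
of `⋆`-positions is `{d'k}` for some `k`. So if some accepted word is not of that shape, either
its first `⋆` comes after a `⋆`-free prefix of length not divisible by `d'` (a state of `Q_i`)
or it has a second `⋆`, read after a word `𝐮⋆𝐯` (a state of `Q_fra`). Conversely, a state `q` of
`Q_fra` or `Q_i` with `L(𝒜_{δ(q,⋆)}) ≠ ∅` is the source of an accepted word with two `⋆`, or
with its `⋆` at a position not divisible by `d'`.
-/

section Cat

variable {A : Type}

theorem cat_apply_of_lt {p : List A} {m : ℕ} (h : m < p.length) (w : ℕ → A) :
    cat p w m = p[m] := by
  simp [cat, h]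

@[simp]
theorem cat_length_add (p : List A) (w : ℕ → A) (k : ℕ) :
    cat p w (p.length + k) = w k := by
  simp [cat]

@[simp]
theorem ofFn_cat (p : List A) (w : ℕ → A) :
    List.ofFn (fun i : Fin p.length => cat p w i) = p := by
  simp [cat_apply_of_lt]

theorem cat_ofFn_add (w : ℕ → A) (n : ℕ) :
    cat (List.ofFn fun i : Fin n => w i) (fun k => w (n + k)) = w := by
  funext m
  by_cases h : m < n
  · simp [cat, h]
  · obtain ⟨k, rfl⟩ := Nat.exists_eq_add_of_le (not_lt.1 h)
    simpa using cat_length_add (List.ofFn fun i : Fin n => w i) (fun k => w (n + k)) k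

end Cat

section Star

variable {B : Type}

theorem exists_map_some_eq_ofFn {n : ℕ} (f : Fin n → Option B) (h : ∀ i, f i ≠ none) :
    ∃ u : List B, u.map some = List.ofFn f :=
  ⟨List.ofFn fun i => (f i).get (Option.isSome_iff_ne_none.2 (h i)), by
    rw [List.map_ofFn]; congr 1; funext i; simp⟩

theorem cat_map_some_star_eq_none_iff (u : List B) (w : ℕ → B) (m : ℕ) :
    cat (u.map some ++ [none]) (fun n => some (w n)) m = none ↔ m = u.length := by
  unfold cat
  split_ifs with h
  · simp only [List.length_append, List.length_map, List.length_singleton] at h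
    rcases Nat.lt_or_ge m u.length with hm | hm
    · simp [List.getElem_append_left, hm]; omega
    · simp [List.getElem_append_right, hm]; omega
  · simp at h ⊢; omega

/-- `B^{d'ℕ}⋆B^ω`, with `none` as `⋆`. -/
def starWords (B : Type) (d' : ℕ) : Set (ℕ → Option B) :=
  {w | ∃ (u : List B) (k : ℕ) (w' : ℕ → B),
    u.length = d' * k ∧ w = cat (u.map some ++ [none]) (fun n => some (w' n))}

theorem mem_starWords_iff {d' : ℕ} {w : ℕ → Option B} :
    w ∈ starWords B d' ↔ ∃ k, ∀ m, w m = none ↔ m = d' * k := by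
  constructor
  · rintro ⟨u, k, w', hu, rfl⟩
    exact ⟨k, fun m => by rw [cat_map_some_star_eq_none_iff, hu]⟩
  · rintro ⟨k, hk⟩
    have hsome : ∀ m, m ≠ d' * k → (w m).isSome := fun m hm =>
      Option.isSome_iff_ne_none.2 fun h => hm ((hk m).1 h)
    obtain ⟨u, hu⟩ := exists_map_some_eq_ofFn (fun i : Fin (d' * k) => w i)
      fun i => Option.isSome_iff_ne_none.1 (hsome i i.2.ne)
    refine ⟨u, k, fun j => (w (d' * k + 1 + j)).get (hsome _ (by omega)),
      by simpa using congrArg List.length hu, ?_⟩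
    conv_lhs => rw [← cat_ofFn_add w (d' * k + 1)]
    rw [List.ofFn_succ_last]
    simp only [Fin.val_castSucc, Fin.val_last, ← hu, (hk _).2 rfl, Option.some_get]

end Star

namespace DBA

variable {A B Q : Type} (M : DBA A Q)

theorem deltaStar_append (q : Q) (u v : List A) :
    M.deltaStar q (u ++ v) = M.deltaStar (M.deltaStar q u) v := by
  induction u generalizing q with
  | nil => rfl
  | cons a u ih => exact ih _

theorem run_start_eq_deltaStar (q : Q) (w : ℕ → A) (n : ℕ) :
    (M.start q).run w n = M.deltaStar q (List.ofFn fun i : Fin n => w i) := by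
  induction n with
  | zero => rfl
  | succ n ih =>
    rw [List.ofFn_succ_last, deltaStar_append]
    simp only [Fin.val_castSucc, Fin.val_last]
    rw [← ih]
    rfl

theorem run_eq_deltaStar (w : ℕ → A) (n : ℕ) :
    M.run w n = M.deltaStar M.init (List.ofFn fun i : Fin n => w i) :=
  M.run_start_eq_deltaStar M.init w n

theorem run_add (w : ℕ → A) (m n : ℕ) :
    M.run w (m + n) = (M.start (M.run w m)).run (fun k => w (m + k)) n := by
  induction n with
  | zero => rfl
  | succ n ih => exact congrArg (M.delta · _) ih

theorem accepts_iff_accepts_shift (w : ℕ → A) (m : ℕ) :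
    M.Accepts w ↔ (M.start (M.run w m)).Accepts (fun k => w (m + k)) := by
  refine exists_congr fun q => and_congr_right fun _ => ⟨fun h N => ?_, fun h N => ?_⟩
  · obtain ⟨n, hn, hq⟩ := h (m + N)
    obtain ⟨k, rfl⟩ := Nat.exists_eq_add_of_le (le_of_add_le_left hn)
    exact ⟨k, by omega, (M.run_add w m k).symm.trans hq⟩
  · obtain ⟨k, hk, hq⟩ := h N
    exact ⟨m + k, by omega, (M.run_add w m k).trans hq⟩

theorem accepts_cat_iff (p : List A) (w : ℕ → A) :
    M.Accepts (cat p w) ↔ (M.start (M.deltaStar M.init p)).Accepts w := by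
  rw [M.accepts_iff_accepts_shift _ p.length, run_eq_deltaStar, ofFn_cat]
  simp only [cat_length_add]

theorem nonempty_lang_start_delta_run {w : ℕ → A} (hw : w ∈ M.Lang) (n : ℕ) :
    (M.start (M.delta (M.run w n) (w n))).Lang.Nonempty :=
  ⟨_, (M.accepts_iff_accepts_shift w (n + 1)).1 hw⟩

theorem exists_run_add_eq_deltaStar_map_some (M : DBA (Option B) Q) (w : ℕ → Option B)
    (m n : ℕ) (h : ∀ i < n, w (m + i) ≠ none) :
    ∃ v : List B, v.length = n ∧ M.run w (m + n) = M.deltaStar (M.run w m) (v.map some) := by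
  obtain ⟨v, hv⟩ := exists_map_some_eq_ofFn (fun i : Fin n => w (m + i)) fun i => h i i.2
  refine ⟨v, by simpa using congrArg List.length hv, ?_⟩
  rw [hv, run_add, run_start_eq_deltaStar]

end DBA

section StarWords

variable {B Q : Type} {M : DBA (Option B) Q} {d' : ℕ}

namespace DBA

theorem exists_star_positions_of_lang_subset (H : M.Lang ⊆ starWords B d')
    {p : List (Option B)} {x : ℕ → Option B}
    (hx : x ∈ (M.start (M.delta (M.deltaStar M.init p) none)).Lang) :
    ∃ k, ∀ m, cat (p ++ [none]) x m = none ↔ m = d' * k :=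
  mem_starWords_iff.1 <| H <| (M.accepts_cat_iff _ x).2 <| by rwa [M.deltaStar_append]

theorem lang_start_delta_eq_empty_of_two_stars (H : M.Lang ⊆ starWords B d') (u v : List B) :
    (M.start (M.delta (M.deltaStar M.init (u.map some ++ none :: v.map some)) none)).Lang = ∅ := by
  refine Set.eq_empty_iff_forall_notMem.2 fun x hx => ?_
  obtain ⟨k, hk⟩ := exists_star_positions_of_lang_subset H hx
  have h₁ := (hk u.length).1 (by simp [cat])
  have h₂ := (hk (u.length + (v.length + 1))).1 (by simp [cat])
  omega

theorem lang_start_delta_eq_empty_of_length_mod_ne_zero (H : M.Lang ⊆ starWords B d')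
    (u : List B) (hu : u.length % d' ≠ 0) :
    (M.start (M.delta (M.deltaStar M.init (u.map some)) none)).Lang = ∅ := by
  refine Set.eq_empty_iff_forall_notMem.2 fun x hx => ?_
  obtain ⟨k, hk⟩ := exists_star_positions_of_lang_subset H hx
  exact hu (by simp [(hk u.length).1 (by simp [cat])])

theorem mem_starWords_of_mem_lang
    (hfra : ∀ u v : List B,
      (M.start (M.delta (M.deltaStar M.init (u.map some ++ none :: v.map some)) none)).Lang = ∅)
    (hres : ∀ u : List B, u.length % d' ≠ 0 →
      (M.start (M.delta (M.deltaStar M.init (u.map some)) none)).Lang = ∅)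
    {w : ℕ → Option B} (hw : w ∈ M.Lang) (hstar : ∃ n, w n = none) :
    w ∈ starWords B d' := by
  have hempty (n : ℕ) (hn : w n = none) {p : List (Option B)} (hp : M.run w n = M.deltaStar M.init p)
      (h : (M.start (M.delta (M.deltaStar M.init p) none)).Lang = ∅) : False :=
    (M.nonempty_lang_start_delta_run hw n).ne_empty (by rwa [hn, hp])
  obtain ⟨n₀, hn₀, hlt⟩ : ∃ n, w n = none ∧ ∀ i < n, w i ≠ none :=
    ⟨_, Nat.find_spec hstar, fun i => Nat.find_min _⟩
  obtain ⟨u, hu, hrun⟩ := M.exists_run_add_eq_deltaStar_map_some w 0 n₀ (by simpa using hlt)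
  simp only [zero_add, DBA.run] at hrun
  have hmod : n₀ % d' = 0 := by_contra fun h => hempty n₀ hn₀ hrun (hres u (hu ▸ h))
  have hafter (k : ℕ) : w (n₀ + 1 + k) ≠ none := by
    intro hk
    obtain ⟨k₀, hk₀, hlt'⟩ : ∃ k, w (n₀ + 1 + k) = none ∧ ∀ i < k, w (n₀ + 1 + i) ≠ none :=
      ⟨_, Nat.find_spec (⟨k, hk⟩ : ∃ j, w (n₀ + 1 + j) = none), fun i => Nat.find_min _⟩
    obtain ⟨v, -, hrun'⟩ := M.exists_run_add_eq_deltaStar_map_some w (n₀ + 1) k₀ hlt'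
    refine hempty _ hk₀ ?_ (hfra u v)
    rw [hrun', DBA.run, hn₀, hrun, M.deltaStar_append]
    rfl
  refine mem_starWords_iff.2 ⟨n₀ / d', fun m => ?_⟩
  rw [Nat.mul_div_cancel' (Nat.dvd_of_mod_eq_zero hmod)]
  refine ⟨fun hm => ?_, fun hm => hm ▸ hn₀⟩
  by_contra hne
  rcases Nat.lt_or_gt_of_ne hne with h | h
  · exact hlt m h hm
  · exact hafter (m - n₀ - 1) (by rwa [show n₀ + 1 + (m - n₀ - 1) = m by omega])

end DBA

end StarWords

theorem stmt15_general {B Q : Type} (d' : ℕ) (hd' : 0 < d')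
    (M : DBA (Option B) Q)
    (hstar : ∀ w ∈ M.Lang, ∃ n, w n = none) :
    (∀ w ∈ M.Lang, ∃ (u : List B) (k : ℕ) (w' : ℕ → B),
        u.length = d' * k ∧ w = cat (u.map some ++ [none]) (fun n => some (w' n))) ↔
      (∀ q : Q,
        ((∃ u v : List B, M.deltaStar M.init (u.map some ++ none :: v.map some) = q) ∨
         (∃ i : ℕ, 1 ≤ i ∧ i < d' ∧
           ∃ u : List B, u.length % d' = i ∧ M.deltaStar M.init (u.map some) = q)) →
        (M.start (M.delta q none)).Lang = ∅) := by
  constructor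
  · rintro H q (⟨u, v, rfl⟩ | ⟨i, hi, -, u, hu, rfl⟩)
    · exact DBA.lang_start_delta_eq_empty_of_two_stars H u v
    · exact DBA.lang_start_delta_eq_empty_of_length_mod_ne_zero H u (by omega)
  · intro H w hw
    exact DBA.mem_starWords_of_mem_lang (fun u v => H _ (Or.inl ⟨u, v, rfl⟩))
      (fun u hu => H _ (Or.inr ⟨_, Nat.pos_of_ne_zero hu, Nat.mod_lt _ hd', u, rfl, rfl⟩))
      hw (hstar w hw)

/-- characterization of automata accepting only words of
`B^{d'ℕ}⋆B^ω`, via the sets `Q_∅`, `Q_i` and `Q_fra`. -/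
theorem stmt15 {B Q : Type} [Fintype B] [Fintype Q] (d' : ℕ) (hd' : 0 < d')
    (M : DBA (Option B) Q)
    (hstar : ∀ w ∈ M.Lang, ∃ n, w n = none) :
    (∀ w ∈ M.Lang, ∃ (u : List B) (k : ℕ) (w' : ℕ → B),
        u.length = d' * k ∧ w = cat (u.map some ++ [none]) (fun n => some (w' n))) ↔
      (∀ q : Q,
        ((∃ u v : List B, M.deltaStar M.init (u.map some ++ none :: v.map some) = q) ∨
         (∃ i : ℕ, 1 ≤ i ∧ i < d' ∧
           ∃ u : List B, u.length % d' = i ∧ M.deltaStar M.init (u.map some) = q)) →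
        (M.start (M.delta q none)).Lang = ∅) :=
  stmt15_general d' hd' M hstar
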